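/- arXiv:2204.01877 — 4 statements merged into one kernel-verified Lean document; each statement's English description precedes it below -/
import Mathlib

section
/- (Douglas-Rachford splitting, weakly monotone case.) Let η ∈ ℝⁿ be a positive vector. Let F, G : ℝⁿ → ℝⁿ be continuously differentiable, Lipschitz with respect to ‖·‖_{∞,η⁻¹}, with diagonal bounds d_F > 0 and d_G > 0 respectively, and with μ_{∞,η⁻¹}(−DF(x)) ≤ 0 and μ_{∞,η⁻¹}(−DG(x)) ≤ 0 for all x ∈ ℝⁿ. Suppose there exists x with F(x) + G(x) = 0, and let α ∈ (0, min{1/d_F, 1/d_G}]. Let sequences satisfy, for all k: x_{k+1/2} + αG(x_{k+1/2}) = z_k; z_{k+1/2} = 2x_{k+1/2} − z_k; x_{k+1} + αF(x_{k+1}) = z_{k+1/2}; z_{k+1} = z_k + x_{k+1} − x_{k+1/2}. Then (x_k) converges to some x* with F(x*) + G(x*) = 0. -/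
/-!
In the coordinates `y = x / η` the weighted norm is the sup norm. Writing
`F u - F v = B (u - v)` with `B` the Jacobian averaged along the segment, `B` inherits
`μ(-B) ≤ 0` and the diagonal bound `d`; hence `I + αF` does not shrink distances and, for
`α d ≤ 1`, `I - αF` does not expand them. Both reflected resolvents `2 (I + αF)⁻¹ - I` are
then nonexpansive, and `z ↦ (z + R_F (R_G z)) / 2` is a Krasnoselskii–Mann iteration of a
nonexpansive map. It is Fejér monotone with respect to the fixed points and asymptotically
regular by the Goebel–Kirk inequality; in finite dimension its bounded orbit has a cluster
point, which is a fixed point by continuity, and Fejér monotonicity turns subsequential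
convergence into convergence.
-/

open Filter

/-- Diagonally weighted ℓ∞ norm: ‖x‖_{∞,η⁻¹} = max_i |x_i|/η_i. -/
noncomputable def wNorm {n : ℕ} (η x : Fin n → ℝ) : ℝ := ⨆ i, |x i| / η i

/-- Diagonally weighted ℓ∞ logarithmic norm of a matrix. -/
noncomputable def logNorm {n : ℕ} (η : Fin n → ℝ) (A : Matrix (Fin n) (Fin n) ℝ) : ℝ :=
  ⨆ i, (A i i + ∑ j ∈ Finset.univ.erase i, (η j / η i) * |A i j|)

/-- Jacobian matrix of `F` at `x`: (DF(x))_{ij} = ∂F_i/∂x_j. -/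
noncomputable def jac {n : ℕ} (F : (Fin n → ℝ) → (Fin n → ℝ)) (x : Fin n → ℝ) :
    Matrix (Fin n) (Fin n) ℝ :=
  fun i j => fderiv ℝ F x (Pi.single j 1) i

open Topology Finset Matrix

variable {n : ℕ} {η : Fin n → ℝ}

section WeightedNorm

lemma wNorm_nonneg (hη : ∀ i, 0 < η i) (v : Fin n → ℝ) : 0 ≤ wNorm η v :=
  Real.iSup_nonneg fun i => div_nonneg (abs_nonneg _) (hη i).le

lemma div_le_wNorm (v : Fin n → ℝ) (i : Fin n) : |v i| / η i ≤ wNorm η v :=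
  le_ciSup (f := fun i => |v i| / η i) (Set.finite_range _).bddAbove i

lemma abs_le_mul_wNorm (hη : ∀ i, 0 < η i) (v : Fin n → ℝ) (i : Fin n) :
    |v i| ≤ η i * wNorm η v :=
  (div_le_iff₀' (hη i)).1 (div_le_wNorm v i)

lemma wNorm_le (hη : ∀ i, 0 < η i) {v : Fin n → ℝ} {r : ℝ} (hr : 0 ≤ r)
    (h : ∀ i, |v i| ≤ η i * r) : wNorm η v ≤ r :=
  Real.iSup_le (fun i => (div_le_iff₀' (hη i)).2 (h i)) hr

lemma exists_abs_eq_mul_wNorm [Nonempty (Fin n)] (hη : ∀ i, 0 < η i) (v : Fin n → ℝ) :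
    ∃ i, |v i| = η i * wNorm η v := by
  obtain ⟨i, hi⟩ := exists_eq_ciSup_of_finite (f := fun i => |v i| / η i)
  exact ⟨i, by rw [wNorm, ← hi, mul_div_cancel₀ _ (hη i).ne']⟩

/-- Coordinates in which `wNorm η` becomes the sup norm. -/
noncomputable def weightEquiv (hη : ∀ i, 0 < η i) : (Fin n → ℝ) ≃L[ℝ] (Fin n → ℝ) :=
  (LinearEquiv.piCongrRight fun i =>
    LinearEquiv.smulOfNeZero ℝ ℝ (η i)⁻¹ (inv_ne_zero (hη i).ne')).toContinuousLinearEquiv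

lemma weightEquiv_apply (hη : ∀ i, 0 < η i) (v : Fin n → ℝ) (i : Fin n) :
    weightEquiv hη v i = v i / η i :=
  inv_mul_eq_div _ _

lemma wNorm_eq_norm_weightEquiv (hη : ∀ i, 0 < η i) (v : Fin n → ℝ) :
    wNorm η v = ‖weightEquiv hη v‖ := by
  have hcoord : ∀ i, ‖weightEquiv hη v i‖ = |v i| / η i := fun i => by
    rw [weightEquiv_apply, Real.norm_eq_abs, abs_div, abs_of_pos (hη i)]
  refine le_antisymm (Real.iSup_le (fun i => ?_) (norm_nonneg _))
    ((pi_norm_le_iff_of_nonneg (wNorm_nonneg hη v)).2 fun i => ?_)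
  · exact hcoord i ▸ norm_le_pi_norm _ i
  · exact (hcoord i).trans_le (div_le_wNorm v i)

end WeightedNorm

section DiagonallyDominant

lemma logNorm_neg_nonpos_iff {A : Matrix (Fin n) (Fin n) ℝ} :
    logNorm η (-A) ≤ 0 ↔ ∀ i, ∑ j ∈ univ.erase i, η j / η i * |A i j| ≤ A i i := by
  simp only [logNorm, Matrix.neg_apply, abs_neg]
  refine ⟨fun h i => ?_, fun h => Real.iSup_nonpos fun i => by linarith [h i]⟩
  linarith [(le_ciSup (Set.finite_range _).bddAbove i).trans h]

variable {A : Matrix (Fin n) (Fin n) ℝ}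

lemma diag_nonneg_of_logNorm_neg_nonpos (hη : ∀ i, 0 < η i) (hA : logNorm η (-A) ≤ 0)
    (i : Fin n) : 0 ≤ A i i :=
  (sum_nonneg fun j _ => mul_nonneg (div_nonneg (hη j).le (hη i).le) (abs_nonneg _)).trans
    (logNorm_neg_nonpos_iff.1 hA i)

lemma abs_mulVec_sub_diag_le (hη : ∀ i, 0 < η i) (hA : logNorm η (-A) ≤ 0)
    (w : Fin n → ℝ) (i : Fin n) :
    |(A *ᵥ w) i - A i i * w i| ≤ A i i * (η i * wNorm η w) := by
  have hscale := mul_nonneg (hη i).le (wNorm_nonneg hη w)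
  rw [Matrix.mulVec, dotProduct, ← add_sum_erase _ _ (mem_univ i), add_sub_cancel_left]
  calc |∑ j ∈ univ.erase i, A i j * w j|
      ≤ ∑ j ∈ univ.erase i, η j / η i * |A i j| * (η i * wNorm η w) := by
        refine (abs_sum_le_sum_abs _ _).trans (sum_le_sum fun j _ => ?_)
        calc |A i j * w j| ≤ |A i j| * (η j * wNorm η w) := by
              rw [abs_mul]; gcongr; exact abs_le_mul_wNorm hη w j
          _ = η j / η i * |A i j| * (η i * wNorm η w) := by
              field_simp [(hη i).ne']
    _ = (∑ j ∈ univ.erase i, η j / η i * |A i j|) * (η i * wNorm η w) := (sum_mul ..).symm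
    _ ≤ A i i * (η i * wNorm η w) := by gcongr; exact logNorm_neg_nonpos_iff.1 hA i

lemma wNorm_le_wNorm_add_smul_mulVec (hη : ∀ i, 0 < η i) (hA : logNorm η (-A) ≤ 0)
    {α : ℝ} (hα : 0 ≤ α) (w : Fin n → ℝ) : wNorm η w ≤ wNorm η (w + α • A *ᵥ w) := by
  rcases isEmpty_or_nonempty (Fin n) with _ | _
  · simp [wNorm]
  -- At a coordinate attaining `wNorm η w`, the diagonal term dominates the off-diagonal ones.
  obtain ⟨i, hi⟩ := exists_abs_eq_mul_wNorm hη w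
  have hAii := diag_nonneg_of_logNorm_neg_nonpos hη hA i
  have hoff := mul_le_mul_of_nonneg_left (abs_mulVec_sub_diag_le hη hA w i) hα
  have hcoord : (w + α • A *ᵥ w) i
      = (1 + α * A i i) * w i + α * ((A *ᵥ w) i - A i i * w i) := by
    simp only [Pi.add_apply, Pi.smul_apply, smul_eq_mul]; ring
  have key : η i * wNorm η w ≤ |(w + α • A *ᵥ w) i| := by
    rw [hcoord]
    calc η i * wNorm η w
        = |(1 + α * A i i) * w i| - α * (A i i * (η i * wNorm η w)) := by
          rw [abs_mul, hi, abs_of_nonneg (by positivity)]; ring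
      _ ≤ |(1 + α * A i i) * w i| - |α * ((A *ᵥ w) i - A i i * w i)| := by
          rw [abs_mul α, abs_of_nonneg hα]; linarith
      _ ≤ _ := abs_sub_abs_le_abs_add _ _
  exact le_of_mul_le_mul_left (key.trans (abs_le_mul_wNorm hη _ i)) (hη i)

lemma wNorm_sub_smul_mulVec_le (hη : ∀ i, 0 < η i) (hA : logNorm η (-A) ≤ 0)
    {α : ℝ} (hα : 0 ≤ α) (hαA : ∀ i, α * A i i ≤ 1) (w : Fin n → ℝ) :
    wNorm η (w - α • A *ᵥ w) ≤ wNorm η w := by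
  refine wNorm_le hη (wNorm_nonneg hη w) fun i => ?_
  have hcoord : (w - α • A *ᵥ w) i
      = (1 - α * A i i) * w i - α * ((A *ᵥ w) i - A i i * w i) := by
    simp only [Pi.sub_apply, Pi.smul_apply, smul_eq_mul]; ring
  have h1 : 0 ≤ 1 - α * A i i := sub_nonneg.2 (hαA i)
  rw [hcoord]
  calc _ ≤ |(1 - α * A i i) * w i| + |α * ((A *ᵥ w) i - A i i * w i)| := abs_sub _ _
    _ ≤ (1 - α * A i i) * (η i * wNorm η w) + α * (A i i * (η i * wNorm η w)) := by
        rw [abs_mul, abs_mul, abs_of_nonneg h1, abs_of_nonneg hα]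
        gcongr
        · exact abs_le_mul_wNorm hη w i
        · exact abs_mulVec_sub_diag_le hη hA w i
    _ = η i * wNorm η w := by ring

end DiagonallyDominant

section MeanValue

variable {F : (Fin n → ℝ) → (Fin n → ℝ)}

lemma jac_mulVec (y w : Fin n → ℝ) : jac F y *ᵥ w = fderiv ℝ F y w :=
  LinearMap.toMatrix'_mulVec (fderiv ℝ F y : (Fin n → ℝ) →ₗ[ℝ] (Fin n → ℝ)) w

lemma continuous_jac_apply (hF : ContDiff ℝ 1 F) (i j : Fin n) :
    Continuous fun y => jac F y i j :=
  (continuous_apply i).comp ((hF.continuous_fderiv one_ne_zero).clm_apply continuous_const)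

noncomputable def avgJac (F : (Fin n → ℝ) → (Fin n → ℝ)) (u v : Fin n → ℝ) :
    Matrix (Fin n) (Fin n) ℝ :=
  fun i j => ∫ t in (0 : ℝ)..1, jac F (v + t • (u - v)) i j

lemma continuous_jac_segment (hF : ContDiff ℝ 1 F) (u v : Fin n → ℝ) (i j : Fin n) :
    Continuous fun t : ℝ => jac F (v + t • (u - v)) i j :=
  (continuous_jac_apply hF i j).comp (by fun_prop)

lemma sub_eq_avgJac_mulVec (hF : ContDiff ℝ 1 F) (u v : Fin n → ℝ) :
    F u - F v = avgJac F u v *ᵥ (u - v) := by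
  ext i
  have hderiv : ∀ t : ℝ, HasDerivAt (fun t => F (v + t • (u - v)) i)
      (∑ j, jac F (v + t • (u - v)) i j * (u - v) j) t := fun t => by
    have hseg : HasDerivAt (fun t : ℝ => v + t • (u - v)) (u - v) t := by
      simpa using ((hasDerivAt_id t).smul_const (u - v)).const_add v
    have := (hasFDerivAt_apply i _).comp_hasDerivAt t
      (((hF.differentiable one_ne_zero) _).hasFDerivAt.comp_hasDerivAt t hseg)
    rwa [← jac_mulVec] at this
  have hc : ∀ j, Continuous fun t : ℝ => jac F (v + t • (u - v)) i j * (u - v) j := fun j =>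
    (continuous_jac_segment hF u v i j).mul continuous_const
  have hFTC := intervalIntegral.integral_eq_sub_of_hasDerivAt (fun t _ => hderiv t)
    ((continuous_finsetSum _ fun j _ => hc j).intervalIntegrable 0 1)
  simp only [one_smul, zero_smul, add_zero, add_sub_cancel] at hFTC
  rw [Pi.sub_apply, ← hFTC,
    intervalIntegral.integral_finsetSum fun j _ => (hc j).intervalIntegrable 0 1]
  simp only [intervalIntegral.integral_mul_const, mulVec, dotProduct, avgJac]

lemma logNorm_neg_avgJac_nonpos (hη : ∀ i, 0 < η i) (hF : ContDiff ℝ 1 F)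
    (hmono : ∀ y, logNorm η (-jac F y) ≤ 0) (u v : Fin n → ℝ) :
    logNorm η (-avgJac F u v) ≤ 0 := by
  refine logNorm_neg_nonpos_iff.2 fun i => ?_
  have hc := continuous_jac_segment hF u v i
  calc ∑ j ∈ univ.erase i, η j / η i * |avgJac F u v i j|
      ≤ ∑ j ∈ univ.erase i, ∫ t in (0 : ℝ)..1, η j / η i * |jac F (v + t • (u - v)) i j| :=
        sum_le_sum fun j _ => by
          rw [intervalIntegral.integral_const_mul]
          gcongr
          · exact div_nonneg (hη j).le (hη i).le
          · exact intervalIntegral.abs_integral_le_integral_abs zero_le_one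
    _ = ∫ t in (0 : ℝ)..1, ∑ j ∈ univ.erase i, η j / η i * |jac F (v + t • (u - v)) i j| :=
        (intervalIntegral.integral_finsetSum fun j _ =>
          (continuous_const.mul (hc j).abs).intervalIntegrable 0 1).symm
    _ ≤ ∫ t in (0 : ℝ)..1, jac F (v + t • (u - v)) i i :=
        intervalIntegral.integral_mono_on zero_le_one
          ((continuous_finsetSum _ fun j _ =>
            continuous_const.mul (hc j).abs).intervalIntegrable 0 1)
          ((hc i).intervalIntegrable 0 1)
          fun t _ => logNorm_neg_nonpos_iff.1 (hmono _) i

lemma avgJac_apply_self_le (hF : ContDiff ℝ 1 F) {d : ℝ} (hdiag : ∀ y i, jac F y i i ≤ d)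
    (u v : Fin n → ℝ) (i : Fin n) : avgJac F u v i i ≤ d := by
  simpa [avgJac] using intervalIntegral.integral_mono_on zero_le_one
    ((continuous_jac_segment hF u v i i).intervalIntegrable 0 1)
    (intervalIntegrable_const (μ := MeasureTheory.volume))
    fun t _ => hdiag (v + t • (u - v)) i

end MeanValue

section AsymptoticRegularity

variable {E : Type*} [NormedAddCommGroup E] [NormedSpace ℝ E] {z s : ℕ → E}

lemma norm_succ_sub_eq_half (hzs : ∀ k, (2 : ℝ) • z (k + 1) = z k + s k) (k : ℕ) :
    ‖z (k + 1) - z k‖ = ‖s k - z k‖ / 2 := by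
  have h2 : (2 : ℝ) • (z (k + 1) - z k) = s k - z k := by rw [smul_sub, hzs]; module
  rw [← h2, norm_smul, Real.norm_two]; ring

lemma antitone_norm_sub_of_midpoint (hzs : ∀ k, (2 : ℝ) • z (k + 1) = z k + s k)
    (hs : ∀ k l, ‖s k - s l‖ ≤ ‖z k - z l‖) : Antitone fun k => ‖s k - z k‖ := by
  refine antitone_nat_of_succ_le fun k => ?_
  have h2 : (2 : ℝ) • (s (k + 1) - z (k + 1))
      = (2 : ℝ) • (s (k + 1) - s k) + (s k - z k) := by
    rw [smul_sub, hzs]; module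
  have htri := norm_add_le ((2 : ℝ) • (s (k + 1) - s k)) (s k - z k)
  rw [← h2, norm_smul, norm_smul, Real.norm_two] at htri
  linarith [hs (k + 1) k, norm_succ_sub_eq_half hzs k]

lemma norm_add_sub_le_of_midpoint (hzs : ∀ k, (2 : ℝ) • z (k + 1) = z k + s k)
    (hs : ∀ k l, ‖s k - s l‖ ≤ ‖z k - z l‖) (m i : ℕ) :
    ‖z (i + m) - z i‖ ≤ m / 2 * ‖s i - z i‖ := by
  induction m with
  | zero => simp
  | succ m ih =>
    calc ‖z (i + (m + 1)) - z i‖ ≤ ‖z (i + m + 1) - z (i + m)‖ + ‖z (i + m) - z i‖ :=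
          norm_sub_le_norm_sub_add_norm_sub _ _ _
      _ ≤ ‖s i - z i‖ / 2 + m / 2 * ‖s i - z i‖ := by
          rw [norm_succ_sub_eq_half hzs]
          gcongr
          exact antitone_norm_sub_of_midpoint hzs hs (Nat.le_add_right i m)
      _ = (m + 1 : ℕ) / 2 * ‖s i - z i‖ := by push_cast; ring

lemma goebelKirk_inequality (hzs : ∀ k, (2 : ℝ) • z (k + 1) = z k + s k)
    (hs : ∀ k l, ‖s k - s l‖ ≤ ‖z k - z l‖) (N i : ℕ) :
    (1 + N / 2) * ‖s i - z i‖
      ≤ ‖s (i + N) - z i‖ + 2 ^ N * (‖s i - z i‖ - ‖s (i + N) - z (i + N)‖) := by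
  induction N generalizing i with
  | zero => simp
  | succ N ih =>
    have h2 : (2 : ℝ) • (s (i + N + 1) - z (i + 1))
        = (s (i + N + 1) - z i) + (s (i + N + 1) - s i) := by
      rw [smul_sub, hzs]; module
    have key : 2 * ‖s (i + N + 1) - z (i + 1)‖
        ≤ ‖s (i + N + 1) - z i‖ + (N + 1) / 2 * ‖s i - z i‖ := by
      calc 2 * ‖s (i + N + 1) - z (i + 1)‖
          = ‖(s (i + N + 1) - z i) + (s (i + N + 1) - s i)‖ := by
            rw [← h2, norm_smul, Real.norm_two]
        _ ≤ ‖s (i + N + 1) - z i‖ + ‖z (i + N + 1) - z i‖ :=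
            (norm_add_le _ _).trans (add_le_add le_rfl (hs _ _))
        _ ≤ ‖s (i + N + 1) - z i‖ + (N + 1) / 2 * ‖s i - z i‖ := by
            have := norm_add_sub_le_of_midpoint hzs hs (N + 1) i
            push_cast at this
            rw [← add_assoc] at this
            exact add_le_add le_rfl this
    have hih := ih (i + 1)
    rw [show i + 1 + N = i + N + 1 by omega] at hih
    have hb : ‖s (i + 1) - z (i + 1)‖ ≤ ‖s i - z i‖ :=
      antitone_norm_sub_of_midpoint hzs hs (Nat.le_succ i)
    have hpow : (N : ℝ) + 2 ≤ 2 ^ N * 2 := by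
      rw [← pow_succ]; exact_mod_cast Nat.lt_two_pow_self (n := N + 1)
    rw [← add_assoc, pow_succ]
    push_cast
    nlinarith [mul_le_mul_of_nonneg_right hpow (sub_nonneg.2 hb)]

/-- Asymptotic regularity of the Krasnoselskii–Mann iteration `z (k+1) = (z k + T (z k)) / 2`
for a nonexpansive `T`, with `s k = T (z k)`. -/
theorem tendsto_norm_sub_of_midpoint (hzs : ∀ k, (2 : ℝ) • z (k + 1) = z k + s k)
    (hs : ∀ k l, ‖s k - s l‖ ≤ ‖z k - z l‖) (hz : Bornology.IsBounded (Set.range z)) :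
    Tendsto (fun k => ‖s k - z k‖) atTop (𝓝 0) := by
  have hb := antitone_norm_sub_of_midpoint hzs hs
  obtain ⟨C, hC⟩ := isBounded_iff_forall_norm_le.1 hz
  have hzC : ∀ k, ‖z k‖ ≤ C := fun k => hC _ ⟨k, rfl⟩
  have hM : ∀ k l, ‖s k - z l‖ ≤ 4 * C := fun k l => by
    have hsk : s k = (2 : ℝ) • z (k + 1) - z k := by rw [hzs]; abel
    calc ‖s k - z l‖ = ‖(2 : ℝ) • z (k + 1) - z k - z l‖ := by rw [hsk]
      _ ≤ ‖(2 : ℝ) • z (k + 1)‖ + ‖z k‖ + ‖z l‖ :=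
          (norm_sub_le _ _).trans (add_le_add (norm_sub_le _ _) le_rfl)
      _ = 2 * ‖z (k + 1)‖ + ‖z k‖ + ‖z l‖ := by rw [norm_smul, Real.norm_two]
      _ ≤ 4 * C := by linarith [hzC (k + 1), hzC k, hzC l]
  obtain ⟨L, hL⟩ : ∃ L, Tendsto (fun k => ‖s k - z k‖) atTop (𝓝 L) :=
    ⟨_, tendsto_atTop_ciInf hb ⟨0, by rintro _ ⟨k, rfl⟩; exact norm_nonneg _⟩⟩
  have hL0 : 0 ≤ L := ge_of_tendsto' hL fun k => norm_nonneg _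
  have hLM : ∀ N : ℕ, (1 + N / 2) * L ≤ 4 * C := fun N => by
    have hlim : Tendsto (fun i => 4 * C + 2 ^ N * (‖s i - z i‖ - L)) atTop (𝓝 (4 * C)) := by
      simpa using tendsto_const_nhds.add ((hL.sub_const L).const_mul (2 ^ N))
    refine ge_of_tendsto' hlim fun i => ?_
    have hLi : L ≤ ‖s (i + N) - z (i + N)‖ := hb.le_of_tendsto hL _
    have hLi' : L ≤ ‖s i - z i‖ := hb.le_of_tendsto hL _
    nlinarith [goebelKirk_inequality hzs hs N i, hM (i + N) i,
      mul_le_mul_of_nonneg_left hLi (pow_nonneg (zero_le_two (α := ℝ)) N),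
      mul_le_mul_of_nonneg_left hLi' (by positivity : (0 : ℝ) ≤ 1 + N / 2)]
  obtain rfl : L = 0 := by
    by_contra hne
    obtain ⟨N, hN⟩ := exists_nat_gt (8 * C / L)
    have := hLM N
    rw [div_lt_iff₀ (lt_of_le_of_ne hL0 (Ne.symm hne))] at hN
    nlinarith
  exact hL

end AsymptoticRegularity

section DouglasRachford

variable {E : Type*} [NormedAddCommGroup E] [NormedSpace ℝ E] {α : ℝ} {F G : E → E}

/-- The resolvent `(I + αF)⁻¹` and the forward step `I - αF` are nonexpansive. -/
structure NonexpansiveSteps (α : ℝ) (F : E → E) : Prop where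
  antilipschitz_add : AntilipschitzWith 1 fun u => u + α • F u
  lipschitz_sub : LipschitzWith 1 fun u => u - α • F u

namespace NonexpansiveSteps

lemma continuous (hF : NonexpansiveSteps α F) (hα : α ≠ 0) : Continuous F := by
  have hF_eq : F = fun u => α⁻¹ • (u - (u - α • F u)) := by
    funext u; rw [sub_sub_cancel, inv_smul_smul₀ hα]
  rw [hF_eq]
  exact continuous_const.smul (continuous_id.sub hF.lipschitz_sub.continuous)

lemma norm_sub_le (hF : NonexpansiveSteps α F) {p q a b : E}
    (hp : p + α • F p = a) (hq : q + α • F q = b) : ‖p - q‖ ≤ ‖a - b‖ := by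
  simpa [dist_eq_norm, hp, hq] using hF.antilipschitz_add.le_mul_dist p q

/-- The reflected resolvent `2(I + αF)⁻¹ - I` is nonexpansive. -/
lemma norm_reflect_sub_le (hF : NonexpansiveSteps α F) {p q a b : E}
    (hp : p + α • F p = a) (hq : q + α • F q = b) :
    ‖((2 : ℝ) • p - a) - ((2 : ℝ) • q - b)‖ ≤ ‖a - b‖ := by
  have hreflect : ∀ {p a : E}, p + α • F p = a → (2 : ℝ) • p - a = p - α • F p := by
    rintro p a rfl; module
  rw [hreflect hp, hreflect hq, ← dist_eq_norm]
  calc dist (p - α • F p) (q - α • F q) ≤ dist p q := by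
        simpa using hF.lipschitz_sub.dist_le_mul p q
    _ ≤ ‖a - b‖ := (dist_eq_norm p q).trans_le (hF.norm_sub_le hp hq)

end NonexpansiveSteps

/-- Douglas–Rachford iterates for the zeros of `F + G` with step `α`: `xh k` and `x (k + 1)` are
the paper's `x_{k+1/2}` and `x_{k+1}`, and `z_{k+1/2} = 2 x_{k+1/2} - z_k` is substituted. -/
structure IsDRSequence (α : ℝ) (F G : E → E) (x xh z : ℕ → E) : Prop where
  resolvent_G : ∀ k, xh k + α • G (xh k) = z k
  resolvent_F : ∀ k, x (k + 1) + α • F (x (k + 1)) = (2 : ℝ) • xh k - z k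
  update : ∀ k, z (k + 1) = z k + x (k + 1) - xh k

namespace IsDRSequence

variable {x xh z x' xh' z' : ℕ → E} {u w : E}

lemma map {E' : Type*} [NormedAddCommGroup E'] [NormedSpace ℝ E'] (e : E ≃L[ℝ] E')
    (h : IsDRSequence α F G x xh z) :
    IsDRSequence α (fun y => e (F (e.symm y))) (fun y => e (G (e.symm y)))
      (e ∘ x) (e ∘ xh) (e ∘ z) where
  resolvent_G k := by simpa using congrArg e (h.resolvent_G k)
  resolvent_F k := by simpa using congrArg e (h.resolvent_F k)
  update k := by simpa using congrArg e (h.update k)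

-- Constant sequences are the fixed points of the iteration; their `x` is a zero of `F + G`.
lemma const_of_add_eq_zero (hu : F u + G u = 0) :
    IsDRSequence α F G (fun _ => u) (fun _ => u) (fun _ => u + α • G u) where
  resolvent_G _ := rfl
  resolvent_F _ := by rw [eq_neg_of_add_eq_zero_left hu]; module
  update _ := by abel

lemma add_eq_zero_of_const (hα : α ≠ 0)
    (h : IsDRSequence α F G (fun _ => u) (fun _ => u) (fun _ => w)) : F u + G u = 0 := by
  have hsum : α • (F u + G u) = 0 := by
    have hF := h.resolvent_F 0
    rw [← h.resolvent_G 0] at hF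
    calc α • (F u + G u) = (u + α • F u) - ((2 : ℝ) • u - (u + α • G u)) := by module
      _ = 0 := by rw [hF, sub_self]
  exact (smul_eq_zero.1 hsum).resolve_left hα

lemma norm_xh_sub_le (hG : NonexpansiveSteps α G) (h : IsDRSequence α F G x xh z)
    (h' : IsDRSequence α F G x' xh' z') (k l : ℕ) : ‖xh k - xh' l‖ ≤ ‖z k - z' l‖ :=
  hG.norm_sub_le (h.resolvent_G k) (h'.resolvent_G l)

/-- One Douglas–Rachford step `z k ↦ 2 z (k+1) - z k` is the composition of the two
reflected resolvents, hence nonexpansive. -/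
lemma norm_reflect_sub_le (hF : NonexpansiveSteps α F) (hG : NonexpansiveSteps α G)
    (h : IsDRSequence α F G x xh z) (h' : IsDRSequence α F G x' xh' z') (k l : ℕ) :
    ‖((2 : ℝ) • z (k + 1) - z k) - ((2 : ℝ) • z' (l + 1) - z' l)‖ ≤ ‖z k - z' l‖ := by
  have hstep : ∀ {x xh z : ℕ → E}, IsDRSequence α F G x xh z → ∀ k,
      (2 : ℝ) • z (k + 1) - z k = (2 : ℝ) • x (k + 1) - ((2 : ℝ) • xh k - z k) := by
    intro x xh z h k; rw [h.update]; module
  rw [hstep h, hstep h']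
  exact (hF.norm_reflect_sub_le (h.resolvent_F k) (h'.resolvent_F l)).trans
    (hG.norm_reflect_sub_le (h.resolvent_G k) (h'.resolvent_G l))

lemma antitone_norm_sub (hF : NonexpansiveSteps α F) (hG : NonexpansiveSteps α G)
    (h : IsDRSequence α F G x xh z)
    (hu : IsDRSequence α F G (fun _ => u) (fun _ => u) (fun _ => w)) :
    Antitone fun k => ‖z k - w‖ := by
  refine antitone_nat_of_succ_le fun k => ?_
  have hr := h.norm_reflect_sub_le hF hG hu k 0
  have h2 : (2 : ℝ) • (z (k + 1) - w)
      = (z k - w) + ((2 : ℝ) • z (k + 1) - z k - ((2 : ℝ) • w - w)) := by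
    module
  have htri := norm_add_le (z k - w) ((2 : ℝ) • z (k + 1) - z k - ((2 : ℝ) • w - w))
  rw [← h2, norm_smul, Real.norm_two] at htri
  linarith

lemma tendsto_succ_sub (hF : NonexpansiveSteps α F) (hG : NonexpansiveSteps α G)
    (h : IsDRSequence α F G x xh z)
    (hu : IsDRSequence α F G (fun _ => u) (fun _ => u) (fun _ => w)) :
    Tendsto (fun k => z (k + 1) - z k) atTop (𝓝 0) := by
  have hbdd : Bornology.IsBounded (Set.range z) := by
    refine (Metric.isBounded_closedBall (x := w) (r := ‖z 0 - w‖)).subset ?_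
    rintro _ ⟨k, rfl⟩
    rw [Metric.mem_closedBall, dist_eq_norm]
    exact h.antitone_norm_sub hF hG hu (Nat.zero_le k)
  have hreg := tendsto_norm_sub_of_midpoint (s := fun k => (2 : ℝ) • z (k + 1) - z k)
    (fun k => by abel) (fun k l => h.norm_reflect_sub_le hF hG h k l) hbdd
  rw [tendsto_zero_iff_norm_tendsto_zero]
  simpa [norm_succ_sub_eq_half (s := fun k => (2 : ℝ) • z (k + 1) - z k) (fun k => by abel)]
    using hreg.div_const 2

lemma const_of_tendsto (hFc : Continuous F) (hGc : Continuous G)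
    (h : IsDRSequence α F G x xh z) {φ : ℕ → ℕ} (hφ : Tendsto φ atTop atTop)
    (hz : Tendsto (z ∘ φ) atTop (𝓝 w)) (hxh : Tendsto (xh ∘ φ) atTop (𝓝 u))
    (hreg : Tendsto (fun k => z (k + 1) - z k) atTop (𝓝 0)) :
    IsDRSequence α F G (fun _ => u) (fun _ => u) (fun _ => w) := by
  have hx : Tendsto (fun j => x (φ j + 1)) atTop (𝓝 u) := by
    simpa using (hxh.add (hreg.comp hφ)).congr fun j => by
      simp only [Function.comp_apply, h.update]; abel
  have hG : Tendsto (fun j => xh (φ j) + α • G (xh (φ j))) atTop (𝓝 (u + α • G u)) :=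
    hxh.add (((hGc.tendsto u).comp hxh).const_smul α)
  have hF : Tendsto (fun j => x (φ j + 1) + α • F (x (φ j + 1))) atTop (𝓝 (u + α • F u)) :=
    hx.add (((hFc.tendsto u).comp hx).const_smul α)
  simp only [h.resolvent_G, h.resolvent_F] at hG hF
  exact ⟨fun _ => tendsto_nhds_unique hG hz,
    fun _ => tendsto_nhds_unique hF ((hxh.const_smul (2 : ℝ)).sub hz), fun _ => by abel⟩

lemma tendsto_of_const (hF : NonexpansiveSteps α F) (hG : NonexpansiveSteps α G)
    (h : IsDRSequence α F G x xh z)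
    (hu : IsDRSequence α F G (fun _ => u) (fun _ => u) (fun _ => w))
    {φ : ℕ → ℕ} (hφ : Tendsto φ atTop atTop) (hz : Tendsto (z ∘ φ) atTop (𝓝 w))
    (hreg : Tendsto (fun k => z (k + 1) - z k) atTop (𝓝 0)) : Tendsto x atTop (𝓝 u) := by
  have hzw : Tendsto (fun k => ‖z k - w‖) atTop (𝓝 0) :=
    (tendsto_iff_tendsto_subseq_of_antitone (h.antitone_norm_sub hF hG hu) hφ).2
      (tendsto_iff_norm_sub_tendsto_zero.1 hz)
  have hxh : Tendsto xh atTop (𝓝 u) := tendsto_iff_norm_sub_tendsto_zero.2 <|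
    squeeze_zero (fun _ => norm_nonneg _) (fun k => h.norm_xh_sub_le hG hu k 0) hzw
  refine (tendsto_add_atTop_iff_nat 1).1 ?_
  simpa using (hxh.add hreg).congr fun k => by rw [h.update]; abel

theorem exists_tendsto [ProperSpace E] (hα : α ≠ 0) (hF : NonexpansiveSteps α F)
    (hG : NonexpansiveSteps α G) (h : IsDRSequence α F G x xh z) (hzero : ∃ u, F u + G u = 0) :
    ∃ u, F u + G u = 0 ∧ Tendsto x atTop (𝓝 u) := by
  obtain ⟨u₀, hu₀⟩ := hzero
  have h₀ := const_of_add_eq_zero (α := α) hu₀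
  have hreg := h.tendsto_succ_sub hF hG h₀
  have hmem : ∀ k,
      (z k, xh k) ∈ Metric.closedBall (u₀ + α • G u₀, u₀) ‖z 0 - (u₀ + α • G u₀)‖ := fun k => by
    have hz := h.antitone_norm_sub hF hG h₀ (Nat.zero_le k)
    rw [Metric.mem_closedBall, Prod.dist_eq, max_le_iff, dist_eq_norm, dist_eq_norm]
    exact ⟨hz, (h.norm_xh_sub_le hG h₀ k 0).trans hz⟩
  obtain ⟨⟨w, u⟩, -, φ, hφ, hlim⟩ := tendsto_subseq_of_bounded Metric.isBounded_closedBall hmem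
  have hz : Tendsto (z ∘ φ) atTop (𝓝 w) := (continuous_fst.tendsto _).comp hlim
  have hu := h.const_of_tendsto (hF.continuous hα) (hG.continuous hα) hφ.tendsto_atTop hz
    ((continuous_snd.tendsto _).comp hlim) hreg
  exact ⟨u, hu.add_eq_zero_of_const hα, h.tendsto_of_const hF hG hu hφ.tendsto_atTop hz hreg⟩

end IsDRSequence

end DouglasRachford

section WeightedMonotone

variable {F : (Fin n → ℝ) → (Fin n → ℝ)} {α : ℝ}

lemma wNorm_sub_le_wNorm_add_smul_sub (hη : ∀ i, 0 < η i) (hF : ContDiff ℝ 1 F)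
    (hmono : ∀ y, logNorm η (-jac F y) ≤ 0) (hα : 0 ≤ α) (u v : Fin n → ℝ) :
    wNorm η (u - v) ≤ wNorm η ((u + α • F u) - (v + α • F v)) := by
  have hsplit : (u + α • F u) - (v + α • F v) = (u - v) + α • avgJac F u v *ᵥ (u - v) := by
    rw [← sub_eq_avgJac_mulVec hF]; module
  rw [hsplit]
  exact wNorm_le_wNorm_add_smul_mulVec hη (logNorm_neg_avgJac_nonpos hη hF hmono u v) hα _

lemma wNorm_sub_smul_sub_le (hη : ∀ i, 0 < η i) (hF : ContDiff ℝ 1 F)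
    (hmono : ∀ y, logNorm η (-jac F y) ≤ 0) {d : ℝ} (hdiag : ∀ y i, jac F y i i ≤ d)
    (hα : 0 ≤ α) (hαd : α * d ≤ 1) (u v : Fin n → ℝ) :
    wNorm η ((u - α • F u) - (v - α • F v)) ≤ wNorm η (u - v) := by
  have hsplit : (u - α • F u) - (v - α • F v) = (u - v) - α • avgJac F u v *ᵥ (u - v) := by
    rw [← sub_eq_avgJac_mulVec hF]; module
  rw [hsplit]
  exact wNorm_sub_smul_mulVec_le hη (logNorm_neg_avgJac_nonpos hη hF hmono u v) hα
    (fun i => (mul_le_mul_of_nonneg_left (avgJac_apply_self_le hF hdiag u v i) hα).trans hαd) _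

lemma nonexpansiveSteps_weightEquiv_conj (hη : ∀ i, 0 < η i) (hF : ContDiff ℝ 1 F)
    (hmono : ∀ y, logNorm η (-jac F y) ≤ 0) {d : ℝ} (hdiag : ∀ y i, jac F y i i ≤ d)
    (hα : 0 ≤ α) (hαd : α * d ≤ 1) :
    NonexpansiveSteps α fun y => weightEquiv hη (F ((weightEquiv hη).symm y)) := by
  set e := weightEquiv hη
  have hdist : ∀ u v, dist (e u) (e v) = wNorm η (u - v) := fun u v => by
    rw [dist_eq_norm, ← map_sub, wNorm_eq_norm_weightEquiv hη]
  have hconj : ∀ (c : ℝ) u, e u + c • e (F (e.symm (e u))) = e (u + c • F u) := fun c u => by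
    simp
  constructor
  · refine AntilipschitzWith.of_le_mul_dist fun y y' => ?_
    obtain ⟨u, rfl⟩ := e.surjective y
    obtain ⟨v, rfl⟩ := e.surjective y'
    simp only [hconj, hdist, NNReal.coe_one, one_mul]
    exact wNorm_sub_le_wNorm_add_smul_sub hη hF hmono hα u v
  · refine LipschitzWith.of_dist_le_mul fun y y' => ?_
    obtain ⟨u, rfl⟩ := e.surjective y
    obtain ⟨v, rfl⟩ := e.surjective y'
    simp only [sub_eq_add_neg, ← neg_smul, hconj, hdist, NNReal.coe_one, one_mul]
    simpa only [neg_smul, ← sub_eq_add_neg] using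
      wNorm_sub_smul_sub_le hη hF hmono hdiag hα hαd u v

end WeightedMonotone

lemma mul_le_one_of_le_one_div {a b : ℝ} (ha : 0 < a) (h : a ≤ 1 / b) : a * b ≤ 1 :=
  (le_div_iff₀ (one_div_pos.1 (ha.trans_le h))).1 h

theorem stmt_15_general {n : ℕ} (η : Fin n → ℝ) (hη : ∀ i, 0 < η i)
    (F : (Fin n → ℝ) → (Fin n → ℝ)) (hF : ContDiff ℝ 1 F)
    (dF : ℝ) (hdiagF : ∀ x i, jac F x i i ≤ dF)
    (G : (Fin n → ℝ) → (Fin n → ℝ)) (hG : ContDiff ℝ 1 G)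
    (dG : ℝ) (hdiagG : ∀ x i, jac G x i i ≤ dG)
    (hmonoF : ∀ x, logNorm η (-(jac F x)) ≤ 0)
    (hmonoG : ∀ x, logNorm η (-(jac G x)) ≤ 0)
    (hzero : ∃ z : Fin n → ℝ, F z + G z = 0)
    (α : ℝ) (hα : α ∈ Set.Ioc (0 : ℝ) (min (1 / dF) (1 / dG)))
    (x xh z zh : ℕ → (Fin n → ℝ))
    (h1 : ∀ k, xh k + α • G (xh k) = z k)
    (h2 : ∀ k, zh k = (2 : ℝ) • xh k - z k)
    (h3 : ∀ k, x (k + 1) + α • F (x (k + 1)) = zh k)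
    (h4 : ∀ k, z (k + 1) = z k + x (k + 1) - xh k) :
    ∃ xs : Fin n → ℝ, F xs + G xs = 0 ∧ Tendsto x atTop (nhds xs) := by
  obtain ⟨hα0, hαmin⟩ := hα
  obtain ⟨x₀, hx₀⟩ := hzero
  have hDR : IsDRSequence α F G x xh z := ⟨h1, fun k => (h3 k).trans (h2 k), h4⟩
  obtain ⟨u, hu, hxu⟩ := (hDR.map (weightEquiv hη)).exists_tendsto hα0.ne'
    (nonexpansiveSteps_weightEquiv_conj hη hF hmonoF hdiagF hα0.le
      (mul_le_one_of_le_one_div hα0 (hαmin.trans (min_le_left _ _))))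
    (nonexpansiveSteps_weightEquiv_conj hη hG hmonoG hdiagG hα0.le
      (mul_le_one_of_le_one_div hα0 (hαmin.trans (min_le_right _ _))))
    ⟨weightEquiv hη x₀, by simp [← map_add, hx₀]⟩
  refine ⟨(weightEquiv hη).symm u, ?_, ?_⟩
  · simpa [← map_add] using congrArg (weightEquiv hη).symm hu
  · simpa [Function.comp_def] using ((weightEquiv hη).symm.continuous.tendsto u).comp hxu

/-- Douglas-Rachford splitting: weakly monotone case. -/
theorem stmt_15 {n : ℕ} (η : Fin n → ℝ) (hη : ∀ i, 0 < η i)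
    (F : (Fin n → ℝ) → (Fin n → ℝ)) (hF : ContDiff ℝ 1 F)
    (LF : ℝ) (hLF : ∀ x y, wNorm η (F x - F y) ≤ LF * wNorm η (x - y))
    (dF : ℝ) (hdF : 0 < dF) (hdiagF : ∀ x i, jac F x i i ≤ dF)
    (G : (Fin n → ℝ) → (Fin n → ℝ)) (hG : ContDiff ℝ 1 G)
    (LG : ℝ) (hLG : ∀ x y, wNorm η (G x - G y) ≤ LG * wNorm η (x - y))
    (dG : ℝ) (hdG : 0 < dG) (hdiagG : ∀ x i, jac G x i i ≤ dG)
    (hmonoF : ∀ x, logNorm η (-(jac F x)) ≤ 0)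
    (hmonoG : ∀ x, logNorm η (-(jac G x)) ≤ 0)
    (hzero : ∃ z : Fin n → ℝ, F z + G z = 0)
    (α : ℝ) (hα : α ∈ Set.Ioc (0 : ℝ) (min (1 / dF) (1 / dG)))
    (x xh z zh : ℕ → (Fin n → ℝ))
    (h1 : ∀ k, xh k + α • G (xh k) = z k)
    (h2 : ∀ k, zh k = (2 : ℝ) • xh k - z k)
    (h3 : ∀ k, x (k + 1) + α • F (x (k + 1)) = zh k)
    (h4 : ∀ k, z (k + 1) = z k + x (k + 1) - xh k) :
    ∃ xs : Fin n → ℝ, F xs + G xs = 0 ∧ Tendsto x atTop (nhds xs) :=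
  stmt_15_general η hη F hF dF hdiagF G hG dG hdiagG hmonoF hmonoG hzero α hα x xh z zh h1 h2 h3 h4
end

section
/- (Rate of asymptotic regularity of Krasnosel'skii–Mann iterations.) Let ‖·‖ be any norm on ℝⁿ, let T : ℝⁿ → ℝⁿ be nonexpansive (1-Lipschitz) with respect to ‖·‖, let θ ∈ (0,1), and suppose x* satisfies T(x*) = x*. Define x_{k+1} = (1 − θ)x_k + θT(x_k) from an arbitrary x_0. Then for every k ≥ 1, ‖x_k − T(x_k)‖ ≤ 2‖x_0 − x*‖ / √(kπθ(1−θ)); in particular ‖x_k − T(x_k)‖ → 0 as k → ∞. -/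
/-!
For `k ≤ j` and `R = ‖x₀ - x*‖` one has `‖x_k - x_j‖ ≤ 2R·E[sign(S_j - S_k)]` and
`‖x_k - T x_j‖ ≤ 2R·E[sign(S_j + 1 - S_k)]`, with independent `S_k ~ Bin(k, θ)`, `S_j ~ Bin(j, θ)`:
expanding `x_{k+1}` or `x_{j+1}` as its defining convex combination, the triangle inequality
reproduces the recursion of these expectations in `k` or `j`, so a double induction applies.
On the diagonal the symmetry of the difference `D` of two independent `Bin(k, θ)` variables turns
the second expectation into `P(D = 0) + P(|D| = 1)/2`, which by Fourier inversion is
`(2π)⁻¹ ∫ (1 + cos t) |1 - θ + θ e^{it}|^{2k} dt`. Since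
`|1 - θ + θ e^{it}|² = 1 - 4θ(1-θ) sin²(t/2) ≤ exp(-4θ(1-θ) sin²(t/2))`, the substitution
`r = 2 sin(t/2)` bounds this by a Gaussian integral, which is `1 / √(kπθ(1-θ))`.
-/

open Filter Finset

noncomputable section

namespace KrasnoselskiiMann

def binomWeight (θ : ℝ) (k l : ℕ) : ℝ := k.choose l * θ ^ l * (1 - θ) ^ (k - l)

def binomExp (θ : ℝ) (k : ℕ) (F : ℕ → ℝ) : ℝ := ∑ l ∈ range (k + 1), binomWeight θ k l * F l

variable {θ : ℝ}

lemma binomWeight_eq_zero_of_lt {k l : ℕ} (h : k < l) : binomWeight θ k l = 0 := by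
  simp [binomWeight, Nat.choose_eq_zero_of_lt h]

lemma binomWeight_succ_zero (k : ℕ) : binomWeight θ (k + 1) 0 = (1 - θ) * binomWeight θ k 0 := by
  simp only [binomWeight, Nat.choose_zero_right, Nat.sub_zero, pow_succ]; ring

lemma binomWeight_succ_succ (k l : ℕ) :
    binomWeight θ (k + 1) (l + 1) = θ * binomWeight θ k l + (1 - θ) * binomWeight θ k (l + 1) := by
  rcases lt_or_ge l k with h | h
  · obtain ⟨d, rfl⟩ := Nat.exists_eq_add_of_lt h
    simp only [binomWeight, Nat.choose_succ_succ', Nat.cast_add,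
      show l + d + 1 + 1 - (l + 1) = d + 1 by omega, show l + d + 1 - l = d + 1 by omega,
      show l + d + 1 - (l + 1) = d by omega]
    ring
  · rw [binomWeight_eq_zero_of_lt (show k < l + 1 by omega)]
    obtain rfl | h := h.eq_or_lt
    · simp only [binomWeight, Nat.choose_self, Nat.sub_self, pow_succ]; ring
    · rw [binomWeight_eq_zero_of_lt h, binomWeight_eq_zero_of_lt (by omega)]; ring

lemma binomExp_zero (F : ℕ → ℝ) : binomExp θ 0 F = F 0 := by
  simp [binomExp, binomWeight]

lemma binomExp_succ (k : ℕ) (F : ℕ → ℝ) :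
    binomExp θ (k + 1) F = binomExp θ k (fun l => (1 - θ) * F l + θ * F (l + 1)) := by
  have shift : ∑ l ∈ range (k + 1), binomWeight θ k l * F l
      = binomWeight θ k 0 * F 0 + ∑ l ∈ range (k + 1), binomWeight θ k (l + 1) * F (l + 1) := by
    rw [sum_range_succ' (fun l => binomWeight θ k l * F l), sum_range_succ _ k,
      binomWeight_eq_zero_of_lt (Nat.lt_succ_self k)]
    ring
  simp only [binomExp]
  rw [sum_range_succ', binomWeight_succ_zero]
  simp only [binomWeight_succ_succ, mul_add, add_mul, sum_add_distrib, mul_assoc,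
    mul_left_comm (binomWeight _ _ _), ← mul_sum]
  linear_combination (θ - 1) * shift

lemma binomExp_const (k : ℕ) (c : ℝ) : binomExp θ k (fun _ => c) = c := by
  have h := add_pow θ (1 - θ) k
  rw [add_sub_cancel, one_pow] at h
  conv_rhs => rw [← one_mul c, h]
  simp only [binomExp, binomWeight, sum_mul]
  exact sum_congr rfl fun l _ => by ring

lemma binomExp_add (k : ℕ) (F G : ℕ → ℝ) :
    binomExp θ k (fun l => F l + G l) = binomExp θ k F + binomExp θ k G := by
  simp only [binomExp, mul_add, sum_add_distrib]

lemma binomExp_sub (k : ℕ) (F G : ℕ → ℝ) :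
    binomExp θ k (fun l => F l - G l) = binomExp θ k F - binomExp θ k G := by
  simp only [binomExp, mul_sub, sum_sub_distrib]

lemma binomExp_neg (k : ℕ) (F : ℕ → ℝ) : binomExp θ k (fun l => -F l) = -binomExp θ k F := by
  simp only [binomExp, mul_neg, sum_neg_distrib]

lemma binomExp_const_mul (k : ℕ) (a : ℝ) (F : ℕ → ℝ) :
    binomExp θ k (fun l => a * F l) = a * binomExp θ k F := by
  simp only [binomExp, mul_sum, mul_left_comm]

lemma binomExp_mul_const (k : ℕ) (a : ℝ) (F : ℕ → ℝ) :
    binomExp θ k (fun l => F l * a) = binomExp θ k F * a := by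
  simp only [binomExp, sum_mul, mul_assoc]

lemma binomExp_comm (k j : ℕ) (F : ℕ → ℕ → ℝ) :
    binomExp θ k (fun l => binomExp θ j (F l)) = binomExp θ j (fun m => binomExp θ k (F · m)) := by
  simp only [binomExp, mul_sum]
  rw [sum_comm]
  exact sum_congr rfl fun m _ => sum_congr rfl fun l _ => by ring

/-- `E[sign(S' + c - S)]` for independent `S ~ Bin(k, θ)`, `S' ~ Bin(j, θ)`. -/
def expectedSign (θ : ℝ) (k j : ℕ) (c : ℤ) : ℝ :=
  binomExp θ k fun l => binomExp θ j fun m => ((m + c - l : ℤ).sign : ℝ)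

lemma expectedSign_succ_left (k j : ℕ) (c : ℤ) :
    expectedSign θ (k + 1) j c
      = (1 - θ) * expectedSign θ k j c + θ * expectedSign θ k j (c - 1) := by
  simp only [expectedSign, binomExp_succ, binomExp_add, binomExp_const_mul]
  congr! 8 with l m
  push_cast
  ring

lemma expectedSign_succ_right (k j : ℕ) (c : ℤ) :
    expectedSign θ k (j + 1) c
      = (1 - θ) * expectedSign θ k j c + θ * expectedSign θ k j (c + 1) := by
  simp only [expectedSign, binomExp_succ, ← binomExp_const_mul, ← binomExp_add]
  congr! 8 with l m
  push_cast
  ring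

lemma expectedSign_zero_left (j : ℕ) {c : ℤ} (hc : 0 < c) : expectedSign θ 0 j c = 1 := by
  have h (m : ℕ) : ((m + c - (0 : ℕ) : ℤ).sign : ℝ) = 1 := by
    rw [Int.sign_eq_one_of_pos (by omega), Int.cast_one]
  simp only [expectedSign, binomExp_zero, h, binomExp_const]

lemma expectedSign_self_neg (j : ℕ) (c : ℤ) : expectedSign θ j j (-c) = -expectedSign θ j j c := by
  have h (l m : ℕ) : ((m + -c - l : ℤ).sign : ℝ) = -((l + c - m : ℤ).sign : ℝ) := by
    rw [← Int.cast_neg, ← Int.sign_neg]; congr 3; ring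
  simp only [expectedSign, h, binomExp_neg]
  rw [binomExp_comm]

lemma expectedSign_self_zero (j : ℕ) : expectedSign θ j j 0 = 0 := by
  have h := expectedSign_self_neg (θ := θ) j 0
  rw [neg_zero] at h
  linarith

section Fourier

open Real

lemma integral_cos_int_mul (d : ℤ) :
    ∫ t in -π..π, cos (d * t) = if d = 0 then 2 * π else 0 := by
  split_ifs with hd
  · simp only [hd, Int.cast_zero, zero_mul, cos_zero, intervalIntegral.integral_const, smul_eq_mul]
    ring
  · rw [intervalIntegral.integral_comp_mul_left (fun t => cos t) (Int.cast_ne_zero.mpr hd),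
      integral_cos, mul_neg, sin_neg, sin_int_mul_pi]
    simp

lemma integral_one_add_cos_mul_cos (d : ℤ) :
    ∫ t in -π..π, (1 + cos t) * cos (d * t) = π * ((d + 1).sign - (d - 1).sign) := by
  have h (t : ℝ) : (1 + cos t) * cos (d * t)
      = cos (d * t) + (cos ((d + 1 : ℤ) * t) + cos ((d - 1 : ℤ) * t)) / 2 := by
    push_cast
    rw [add_mul (d : ℝ), sub_mul, one_mul, cos_add, cos_sub]
    ring
  have hint (e : ℤ) : IntervalIntegrable (fun t => cos (e * t)) MeasureTheory.volume (-π) π :=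
    Continuous.intervalIntegrable (by fun_prop) _ _
  simp_rw [h]
  rw [intervalIntegral.integral_add (hint d) ((hint _).add (hint _) |>.div_const 2),
    intervalIntegral.integral_div, intervalIntegral.integral_add (hint _) (hint _),
    integral_cos_int_mul, integral_cos_int_mul, integral_cos_int_mul]
  obtain h | rfl | rfl | rfl | h : d ≤ -2 ∨ d = -1 ∨ d = 0 ∨ d = 1 ∨ 2 ≤ d := by omega
  · simp [show d ≠ 0 by omega, show d + 1 ≠ 0 by omega, show d - 1 ≠ 0 by omega,
      Int.sign_eq_neg_one_of_neg (show d + 1 < 0 by omega),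
      Int.sign_eq_neg_one_of_neg (show d - 1 < 0 by omega)]
  · norm_num
  · norm_num [mul_comm]
  · norm_num
  · simp [show d ≠ 0 by omega, show d + 1 ≠ 0 by omega, show d - 1 ≠ 0 by omega,
      Int.sign_eq_one_of_pos (show 0 < d + 1 by omega),
      Int.sign_eq_one_of_pos (show 0 < d - 1 by omega)]

lemma binomExp_cos_sq_add_binomExp_sin_sq (j : ℕ) (t : ℝ) :
    binomExp θ j (fun l => cos (l * t)) ^ 2 + binomExp θ j (fun l => sin (l * t)) ^ 2
      = (1 - 4 * θ * (1 - θ) * sin (t / 2) ^ 2) ^ j := by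
  set z : ℂ := (1 - θ : ℝ) + (θ : ℝ) * Complex.exp (t * Complex.I)
  have hz : z ^ j = ∑ l ∈ range (j + 1),
      (binomWeight θ j l : ℂ) * Complex.exp ((l * t : ℝ) * Complex.I) := by
    rw [show z = (θ : ℝ) * Complex.exp (t * Complex.I) + (1 - θ : ℝ) from add_comm _ _, add_pow]
    refine sum_congr rfl fun l _ => ?_
    rw [mul_pow, ← Complex.exp_nat_mul, binomWeight]
    push_cast
    ring_nf
  have hre : (z ^ j).re = binomExp θ j (fun l => cos (l * t)) := by
    simp only [hz, Complex.re_sum, Complex.re_ofReal_mul, Complex.exp_ofReal_mul_I_re, binomExp]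
  have him : (z ^ j).im = binomExp θ j (fun l => sin (l * t)) := by
    simp only [hz, Complex.im_sum, Complex.im_ofReal_mul, Complex.exp_ofReal_mul_I_im, binomExp]
  have hnorm : Complex.normSq z = 1 - 4 * θ * (1 - θ) * sin (t / 2) ^ 2 := by
    have hcos : cos t = 1 - 2 * sin (t / 2) ^ 2 := by
      have h := cos_two_mul' (t / 2)
      rw [show 2 * (t / 2) = t by ring] at h
      linear_combination h + cos_sq_add_sin_sq (t / 2)
    simp only [z, Complex.normSq_apply, Complex.add_re, Complex.add_im, Complex.ofReal_re,
      Complex.ofReal_im, Complex.re_ofReal_mul, Complex.im_ofReal_mul,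
      Complex.exp_ofReal_mul_I_re, Complex.exp_ofReal_mul_I_im]
    linear_combination θ ^ 2 * sin_sq_add_cos_sq t + 2 * θ * (1 - θ) * hcos
  rw [← hre, ← him, ← hnorm, ← map_pow, Complex.normSq_apply]
  ring

lemma binomExp_binomExp_cos_sub (j : ℕ) (t : ℝ) :
    (binomExp θ j fun l => binomExp θ j fun m => cos (((m - l : ℤ) : ℝ) * t))
      = (1 - 4 * θ * (1 - θ) * sin (t / 2) ^ 2) ^ j := by
  have h (l m : ℕ) :
      cos (((m - l : ℤ) : ℝ) * t) = cos (l * t) * cos (m * t) + sin (l * t) * sin (m * t) := by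
    push_cast
    rw [sub_mul, cos_sub]
    ring
  simp only [h, binomExp_add, binomExp_const_mul, binomExp_mul_const]
  rw [← binomExp_cos_sq_add_binomExp_sin_sq]
  ring

lemma continuous_binomExp (k : ℕ) {f : ℕ → ℝ → ℝ} (hf : ∀ l, Continuous (f l)) :
    Continuous fun t => binomExp θ k fun l => f l t := by
  simp only [binomExp]
  fun_prop

lemma integral_binomExp (k : ℕ) {f : ℕ → ℝ → ℝ} (hf : ∀ l, Continuous (f l)) (a b : ℝ) :
    ∫ t in a..b, binomExp θ k (fun l => f l t) = binomExp θ k fun l => ∫ t in a..b, f l t := by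
  simp only [binomExp]
  rw [intervalIntegral.integral_finsetSum fun l _ => ((hf l).const_mul _).intervalIntegrable _ _]
  simp only [intervalIntegral.integral_const_mul]

lemma expectedSign_self_one_eq (j : ℕ) :
    expectedSign θ j j 1
      = (2 * π)⁻¹ * ∫ t in -π..π, (1 + cos t) * (1 - 4 * θ * (1 - θ) * sin (t / 2) ^ 2) ^ j := by
  have hker (l m : ℕ) : ((m + 1 - l : ℤ).sign : ℝ) - ((m + -1 - l : ℤ).sign : ℝ)
      = π⁻¹ * ∫ t in -π..π, (1 + cos t) * cos (((m - l : ℤ) : ℝ) * t) := by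
    rw [integral_one_add_cos_mul_cos, inv_mul_cancel_left₀ pi_ne_zero]
    congr 3 <;> ring
  have hcont (l m : ℕ) : Continuous fun t => (1 + cos t) * cos (((m - l : ℤ) : ℝ) * t) := by
    fun_prop
  have hswap : (∫ t in -π..π, (1 + cos t) * binomExp θ j fun l => binomExp θ j fun m =>
        cos (((m - l : ℤ) : ℝ) * t))
      = binomExp θ j fun l => binomExp θ j fun m =>
        ∫ t in -π..π, (1 + cos t) * cos (((m - l : ℤ) : ℝ) * t) := by
    simp only [← binomExp_const_mul]
    rw [integral_binomExp j (fun l => continuous_binomExp j (hcont l))]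
    simp only [integral_binomExp j (hcont _)]
  have hsym : 2 * expectedSign θ j j 1 = expectedSign θ j j 1 - expectedSign θ j j (-1) := by
    rw [expectedSign_self_neg]
    ring
  have hdiff : expectedSign θ j j 1 - expectedSign θ j j (-1) = π⁻¹ * binomExp θ j fun l =>
      binomExp θ j fun m => ∫ t in -π..π, (1 + cos t) * cos (((m - l : ℤ) : ℝ) * t) := by
    simp only [expectedSign, ← binomExp_sub, hker, binomExp_const_mul]
  simp only [← binomExp_binomExp_cos_sub, hswap]
  rw [mul_inv, mul_assoc, ← hdiff, ← hsym]
  ring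

lemma one_add_cos_mul_pow_le {u : ℝ} (hu4 : 4 * u ≤ 1) (j : ℕ) {t : ℝ}
    (ht : t ∈ Set.Icc (-π) π) :
    (1 + cos t) * (1 - 4 * u * sin (t / 2) ^ 2) ^ j
      ≤ 2 * (cos (t / 2) * exp (-(u * j) * (2 * sin (t / 2)) ^ 2)) := by
  have hc0 : 0 ≤ cos (t / 2) := cos_nonneg_of_mem_Icc ⟨by linarith [ht.1], by linarith [ht.2]⟩
  have hone : 1 + cos t = 2 * cos (t / 2) ^ 2 := by
    have h := cos_two_mul (t / 2)
    rw [show 2 * (t / 2) = t by ring] at h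
    linarith
  have hbase : 0 ≤ 1 - 4 * u * sin (t / 2) ^ 2 := by
    nlinarith [sin_sq_le_one (t / 2), sq_nonneg (sin (t / 2))]
  have hpow : (1 - 4 * u * sin (t / 2) ^ 2) ^ j ≤ exp (-(u * j) * (2 * sin (t / 2)) ^ 2) :=
    calc (1 - 4 * u * sin (t / 2) ^ 2) ^ j ≤ exp (-(4 * u * sin (t / 2) ^ 2)) ^ j :=
          pow_le_pow_left₀ hbase (one_sub_le_exp_neg _) j
      _ = exp (-(u * j) * (2 * sin (t / 2)) ^ 2) := by rw [← exp_nat_mul]; ring_nf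
  rw [hone, mul_assoc]
  gcongr 2 * ?_
  calc cos (t / 2) ^ 2 * (1 - 4 * u * sin (t / 2) ^ 2) ^ j
      ≤ cos (t / 2) ^ 2 * exp (-(u * j) * (2 * sin (t / 2)) ^ 2) := by gcongr
    _ ≤ cos (t / 2) * exp (-(u * j) * (2 * sin (t / 2)) ^ 2) := by
      gcongr
      nlinarith [cos_le_one (t / 2)]

lemma integral_one_add_cos_mul_pow_le {u : ℝ} (hu : 0 < u) (hu4 : 4 * u ≤ 1) {j : ℕ} (hj : 0 < j) :
    ∫ t in -π..π, (1 + cos t) * (1 - 4 * u * sin (t / 2) ^ 2) ^ j ≤ 2 * √(π / (u * j)) := by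
  set g : ℝ → ℝ := fun r => exp (-(u * j) * r ^ 2)
  have hsubst : ∫ t in -π..π, cos (t / 2) * g (2 * sin (t / 2)) = ∫ r in (-2)..2, g r := by
    have h := intervalIntegral.integral_deriv_smul_comp (a := -π) (b := π)
      (f := fun t => 2 * sin (t / 2)) (f' := fun t => cos (t / 2)) (g := g)
      (fun t _ => (((hasDerivAt_id t).div_const 2).sin.const_mul 2).congr_deriv (by simp only [id]; ring))
      (by fun_prop) (by fun_prop)
    simpa [neg_div] using h
  have hgauss : ∫ r in (-2)..2, g r ≤ √(π / (u * j)) := by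
    have hb : 0 < u * j := by positivity
    rw [intervalIntegral.integral_of_le (by norm_num), ← integral_gaussian]
    exact MeasureTheory.setIntegral_le_integral (integrable_exp_neg_mul_sq hb)
      (Filter.Eventually.of_forall fun r => (exp_pos _).le)
  calc ∫ t in -π..π, (1 + cos t) * (1 - 4 * u * sin (t / 2) ^ 2) ^ j
      ≤ ∫ t in -π..π, 2 * (cos (t / 2) * g (2 * sin (t / 2))) :=
        intervalIntegral.integral_mono_on (by linarith [pi_pos])
          (Continuous.intervalIntegrable (by fun_prop) _ _)
          (Continuous.intervalIntegrable (by fun_prop) _ _)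
          fun t ht => one_add_cos_mul_pow_le hu4 j ht
    _ = 2 * ∫ r in (-2)..2, g r := by rw [intervalIntegral.integral_const_mul, hsubst]
    _ ≤ 2 * √(π / (u * j)) := by gcongr

lemma expectedSign_self_one_le (hθ : θ ∈ Set.Ioo 0 1) {j : ℕ} (hj : 0 < j) :
    expectedSign θ j j 1 ≤ 1 / √(j * π * θ * (1 - θ)) := by
  set u := θ * (1 - θ)
  have hu : 0 < u := mul_pos hθ.1 (sub_pos.2 hθ.2)
  have hu4 : 4 * u ≤ 1 := by nlinarith [sq_nonneg (2 * θ - 1)]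
  have huj : 0 < u * j := by positivity
  calc expectedSign θ j j 1 ≤ (2 * π)⁻¹ * (2 * √(π / (u * j))) := by
        rw [expectedSign_self_one_eq, show 4 * θ * (1 - θ) = 4 * u by ring]
        gcongr
        exact integral_one_add_cos_mul_pow_le hu hu4 hj
    _ = 1 / √(j * π * θ * (1 - θ)) := by
        rw [show (j : ℝ) * π * θ * (1 - θ) = π * (u * j) by ring, sqrt_div' _ huj.le,
          sqrt_mul pi_pos.le]
        field_simp
        rw [sq_sqrt pi_pos.le]

end Fourier

section Iteration

variable {E : Type*} [AddCommGroup E] [Module ℝ E] (p : Seminorm ℝ E)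

lemma seminorm_smul_add_smul_le {a b α β : ℝ} (ha : 0 ≤ a) (hb : 0 ≤ b) {u v : E}
    (hu : p u ≤ α) (hv : p v ≤ β) : p (a • u + b • v) ≤ a * α + b * β :=
  calc p (a • u + b • v) ≤ p (a • u) + p (b • v) := map_add_le_add p _ _
    _ = a * p u + b * p v := by
      rw [map_smul_eq_mul, map_smul_eq_mul, Real.norm_of_nonneg ha, Real.norm_of_nonneg hb]
    _ ≤ a * α + b * β := by gcongr

variable {p} {T : E → E} {xs : E} {x : ℕ → E}

lemma seminorm_sub_fixedPoint_le (hT : ∀ y z, p (T y - T z) ≤ p (y - z)) (hθ : θ ∈ Set.Icc 0 1)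
    (hxs : T xs = xs) (hx : ∀ k, x (k + 1) = (1 - θ) • x k + θ • T (x k)) (k : ℕ) :
    p (x k - xs) ≤ p (x 0 - xs) := by
  induction k with
  | zero => rfl
  | succ k ih =>
    have hTk : p (T (x k) - xs) ≤ p (x 0 - xs) := by
      simpa only [hxs] using (hT (x k) xs).trans ih
    calc p (x (k + 1) - xs) = p ((1 - θ) • (x k - xs) + θ • (T (x k) - xs)) := by
          rw [hx k]; congr 1; module
      _ ≤ (1 - θ) * p (x 0 - xs) + θ * p (x 0 - xs) :=
          seminorm_smul_add_smul_le p (by linarith [hθ.2]) hθ.1 ih hTk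
      _ = p (x 0 - xs) := by ring

lemma seminorm_sub_apply_le (hT : ∀ y z, p (T y - T z) ≤ p (y - z)) (hθ : θ ∈ Set.Icc 0 1)
    (hxs : T xs = xs) (hx : ∀ k, x (k + 1) = (1 - θ) • x k + θ • T (x k)) {j : ℕ}
    (hj : ∀ k ≤ j, p (x k - x j) ≤ 2 * p (x 0 - xs) * expectedSign θ k j 0) :
    ∀ k ≤ j, p (x k - T (x j)) ≤ 2 * p (x 0 - xs) * expectedSign θ k j 1 := by
  intro k
  induction k with
  | zero =>
    intro _
    have hTj : p (xs - T (x j)) ≤ p (x 0 - xs) := by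
      rw [map_sub_rev]
      simpa only [hxs] using (hT (x j) xs).trans (seminorm_sub_fixedPoint_le hT hθ hxs hx j)
    calc p (x 0 - T (x j)) ≤ p (x 0 - xs) + p (xs - T (x j)) := by
          simpa only [sub_add_sub_cancel] using map_add_le_add p (x 0 - xs) (xs - T (x j))
      _ ≤ 2 * p (x 0 - xs) * expectedSign θ 0 j 1 := by
        rw [expectedSign_zero_left j one_pos]; linarith
  | succ k ih =>
    intro hk
    calc p (x (k + 1) - T (x j)) = p ((1 - θ) • (x k - T (x j)) + θ • (T (x k) - T (x j))) := by
          rw [hx k]; congr 1; module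
      _ ≤ (1 - θ) * (2 * p (x 0 - xs) * expectedSign θ k j 1)
            + θ * (2 * p (x 0 - xs) * expectedSign θ k j 0) :=
          seminorm_smul_add_smul_le p (by linarith [hθ.2]) hθ.1 (ih (by omega))
            ((hT _ _).trans (hj k (by omega)))
      _ = 2 * p (x 0 - xs) * expectedSign θ (k + 1) j 1 := by
        rw [expectedSign_succ_left, sub_self]; ring

lemma seminorm_sub_le (hT : ∀ y z, p (T y - T z) ≤ p (y - z)) (hθ : θ ∈ Set.Icc 0 1)
    (hxs : T xs = xs) (hx : ∀ k, x (k + 1) = (1 - θ) • x k + θ • T (x k)) (j : ℕ) :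
    ∀ k ≤ j, p (x k - x j) ≤ 2 * p (x 0 - xs) * expectedSign θ k j 0 := by
  induction j with
  | zero =>
    intro k hk
    obtain rfl : k = 0 := by omega
    simp [expectedSign_self_zero]
  | succ j ih =>
    intro k hk
    obtain rfl | hk := hk.eq_or_lt
    · simp [expectedSign_self_zero]
    calc p (x k - x (j + 1)) = p ((1 - θ) • (x k - x j) + θ • (x k - T (x j))) := by
          rw [hx j]; congr 1; module
      _ ≤ (1 - θ) * (2 * p (x 0 - xs) * expectedSign θ k j 0)
            + θ * (2 * p (x 0 - xs) * expectedSign θ k j 1) :=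
          seminorm_smul_add_smul_le p (by linarith [hθ.2]) hθ.1 (ih k (by omega))
            (seminorm_sub_apply_le hT hθ hxs hx ih k (by omega))
      _ = 2 * p (x 0 - xs) * expectedSign θ k (j + 1) 0 := by
        rw [expectedSign_succ_right, zero_add]; ring

lemma seminorm_residual_le (hT : ∀ y z, p (T y - T z) ≤ p (y - z)) (hθ : θ ∈ Set.Icc 0 1)
    (hxs : T xs = xs) (hx : ∀ k, x (k + 1) = (1 - θ) • x k + θ • T (x k)) (k : ℕ) :
    p (x k - T (x k)) ≤ 2 * p (x 0 - xs) * expectedSign θ k k 1 :=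
  seminorm_sub_apply_le hT hθ hxs hx (seminorm_sub_le hT hθ hxs hx k) k le_rfl

end Iteration

end KrasnoselskiiMann

end

open KrasnoselskiiMann Real in
theorem stmt_16_general {n : ℕ} (nrm : (Fin n → ℝ) → ℝ)
    (hadd : ∀ x y, nrm (x + y) ≤ nrm x + nrm y)
    (hsmul : ∀ (a : ℝ) (x), nrm (a • x) = |a| * nrm x)
    (T : (Fin n → ℝ) → (Fin n → ℝ))
    (hT : ∀ x y, nrm (T x - T y) ≤ nrm (x - y))
    (θ : ℝ) (hθ : θ ∈ Set.Ioo (0 : ℝ) 1)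
    (xs : Fin n → ℝ) (hxs : T xs = xs)
    (x : ℕ → (Fin n → ℝ))
    (hx : ∀ k, x (k + 1) = (1 - θ) • x k + θ • T (x k)) :
    (∀ k : ℕ, 1 ≤ k →
      nrm (x k - T (x k)) ≤
        2 * nrm (x 0 - xs) / Real.sqrt ((k : ℝ) * Real.pi * θ * (1 - θ))) ∧
    Tendsto (fun k => nrm (x k - T (x k))) atTop (nhds 0) := by
  let p : Seminorm ℝ (Fin n → ℝ) := Seminorm.of nrm hadd fun a v => by rw [hsmul, Real.norm_eq_abs]
  have rate (k : ℕ) (hk : 1 ≤ k) :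
      nrm (x k - T (x k)) ≤ 2 * nrm (x 0 - xs) / √(k * π * θ * (1 - θ)) :=
    calc nrm (x k - T (x k)) ≤ 2 * nrm (x 0 - xs) * expectedSign θ k k 1 :=
          seminorm_residual_le (p := p) hT (Set.Ioo_subset_Icc_self hθ) hxs hx k
      _ ≤ 2 * nrm (x 0 - xs) * (1 / √(k * π * θ * (1 - θ))) := by
          have hR : 0 ≤ nrm (x 0 - xs) := apply_nonneg p _
          gcongr
          exact expectedSign_self_one_le hθ hk
      _ = 2 * nrm (x 0 - xs) / √(k * π * θ * (1 - θ)) := mul_one_div _ _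
  have hgrowth : Tendsto (fun k : ℕ => √(k * π * θ * (1 - θ))) atTop atTop :=
    tendsto_sqrt_atTop.comp <| ((tendsto_natCast_atTop_atTop.atTop_mul_const pi_pos).atTop_mul_const
      hθ.1).atTop_mul_const (sub_pos.2 hθ.2)
  exact ⟨rate, squeeze_zero' (.of_forall fun k => apply_nonneg p _)
    ((eventually_ge_atTop 1).mono rate) (tendsto_const_nhds.div_atTop hgrowth)⟩

/-- Rate of asymptotic regularity of Krasnosel'skii–Mann iterations, for an
arbitrary norm `nrm` on ℝⁿ. -/
theorem stmt_16 {n : ℕ} (nrm : (Fin n → ℝ) → ℝ)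
    (hadd : ∀ x y, nrm (x + y) ≤ nrm x + nrm y)
    (hsmul : ∀ (a : ℝ) (x), nrm (a • x) = |a| * nrm x)
    (hdef : ∀ x, nrm x = 0 ↔ x = 0)
    (T : (Fin n → ℝ) → (Fin n → ℝ))
    (hT : ∀ x y, nrm (T x - T y) ≤ nrm (x - y))
    (θ : ℝ) (hθ : θ ∈ Set.Ioo (0 : ℝ) 1)
    (xs : Fin n → ℝ) (hxs : T xs = xs)
    (x : ℕ → (Fin n → ℝ))
    (hx : ∀ k, x (k + 1) = (1 - θ) • x k + θ • T (x k)) :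
    (∀ k : ℕ, 1 ≤ k →
      nrm (x k - T (x k)) ≤
        2 * nrm (x 0 - xs) / Real.sqrt ((k : ℝ) * Real.pi * θ * (1 - θ))) ∧
    Tendsto (fun k => nrm (x k - T (x k))) atTop (nhds 0) :=
  stmt_16_general nrm hadd hsmul T hT θ hθ xs hxs x hx
end

section
/- Fix a ∈ (0,1) and define g : ℝ → ℝ by g(s) = ((1−a)/a)·min{s, 0}, and G : ℝⁿ → ℝⁿ by G(x)_i = g(x_i) for each i. Then G is monotone with respect to the ℓ∞ norm in the sense that for every α ≥ 0 and all x, y ∈ ℝⁿ, ‖(x + αG(x)) − (y + αG(y))‖_∞ ≥ ‖x − y‖_∞; consequently, for every α > 0, if x + αG(x) = y + αG(y) then x = y, and the resolvent (Id + αG)^{−1} is nonexpansive with respect to ‖·‖_∞ on its domain. -/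
/-- The ℓ∞ norm on ℝⁿ. -/
noncomputable def infNorm {n : ℕ} (x : Fin n → ℝ) : ℝ := ⨆ i, |x i|

/-!
Since `s ↦ ((1 - a) / a) * min s 0` is nondecreasing, `s - t` and `α (g s - g t)` have the same
sign for `α ≥ 0`, so adding the latter can only increase `|s - t|`. Thus `Id + αG` expands every
coordinate difference, hence the ℓ∞ distance; injectivity and nonexpansiveness of the resolvent
are immediate.
-/

theorem infNorm_mono {n : ℕ} {x y : Fin n → ℝ} (h : ∀ i, |x i| ≤ |y i|) :
    infNorm x ≤ infNorm y :=
  ciSup_mono (Set.finite_range _).bddAbove h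

theorem Monotone.abs_sub_le_abs_add_mul_sub {g : ℝ → ℝ} (hg : Monotone g) {α : ℝ} (hα : 0 ≤ α)
    (s t : ℝ) : |s - t| ≤ |(s + α * g s) - (t + α * g t)| := by
  rcases le_total t s with hts | hst
  · have := mul_le_mul_of_nonneg_left (hg hts) hα
    rw [abs_of_nonneg (sub_nonneg.2 hts), abs_of_nonneg (by linarith)]
    linarith
  · have := mul_le_mul_of_nonneg_left (hg hst) hα
    rw [abs_of_nonpos (sub_nonpos.2 hst), abs_of_nonpos (by linarith)]
    linarith

theorem monotone_mul_min_zero {c : ℝ} (hc : 0 ≤ c) : Monotone fun s : ℝ => c * min s 0 :=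
  (monotone_id.min monotone_const).const_mul hc

theorem abs_sub_apply_le_abs_add_smul_sub_apply {n : ℕ} {g : ℝ → ℝ} (hg : Monotone g)
    {G : (Fin n → ℝ) → Fin n → ℝ} (hG : ∀ x i, G x i = g (x i)) (α : ℝ) (hα : 0 ≤ α)
    (x y : Fin n → ℝ) (i : Fin n) :
    |(x - y) i| ≤ |((x + α • G x) - (y + α • G y)) i| := by
  simpa only [Pi.sub_apply, Pi.add_apply, Pi.smul_apply, smul_eq_mul, hG]
    using hg.abs_sub_le_abs_add_mul_sub hα (x i) (y i)

/-- The entrywise map G(x)_i = ((1-a)/a)·min{x_i, 0} is monotone w.r.t. ℓ∞: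
`Id + αG` is expansive, hence injective, and its inverse is nonexpansive. -/
theorem stmt_17 {n : ℕ} (a : ℝ) (ha : a ∈ Set.Ioo (0 : ℝ) 1)
    (G : (Fin n → ℝ) → (Fin n → ℝ))
    (hG : ∀ x i, G x i = ((1 - a) / a) * min (x i) 0) :
    (∀ α : ℝ, 0 ≤ α → ∀ x y : Fin n → ℝ,
      infNorm ((x + α • G x) - (y + α • G y)) ≥ infNorm (x - y)) ∧
    (∀ α : ℝ, 0 < α →
      (∀ x y : Fin n → ℝ, x + α • G x = y + α • G y → x = y) ∧
      (∀ x y u v : Fin n → ℝ, x + α • G x = u → y + α • G y = v →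
        infNorm (x - y) ≤ infNorm (u - v))) := by
  have hc : 0 ≤ (1 - a) / a := div_nonneg (sub_nonneg.2 ha.2.le) ha.1.le
  have hcoord := abs_sub_apply_le_abs_add_smul_sub_apply (monotone_mul_min_zero hc) hG
  have expansive : ∀ α : ℝ, 0 ≤ α → ∀ x y : Fin n → ℝ,
      infNorm ((x + α • G x) - (y + α • G y)) ≥ infNorm (x - y) :=
    fun α hα x y => infNorm_mono (hcoord α hα x y)
  refine ⟨expansive, fun α hα => ⟨fun x y hxy => funext fun i => ?_, ?_⟩⟩
  · have hi := hcoord α hα.le x y i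
    rw [hxy, sub_self, Pi.zero_apply, abs_zero, abs_nonpos_iff, Pi.sub_apply] at hi
    exact sub_eq_zero.1 hi
  · rintro x y u v rfl rfl
    exact expansive α hα.le x y
end

section
/- (Equilibria of LeakyReLU recurrent networks as an operator splitting problem.) Fix a ∈ (0,1) and define φ : ℝ → ℝ by φ(s) = max{s, as}, Φ : ℝⁿ → ℝⁿ by Φ(x)_i = φ(x_i), and df : ℝⁿ → ℝⁿ by df(x)_i = ((1−a)/a)·min{x_i, 0}. Let A ∈ ℝ^{n×n}, B ∈ ℝ^{n×m}, u ∈ ℝ^m, b ∈ ℝⁿ. Then for every x ∈ ℝⁿ: x = Φ(Ax + Bu + b) if and only if (I_n − A)x − (Bu + b) + df(x) = 0. Equivalently, x is an equilibrium of the recurrent neural network ẋ = −x + Φ(Ax + Bu + b) if and only if x is a zero of F + G with F(z) = (I_n − A)z − (Bu + b) and G(z) = df(z). -/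
lemma scalar_leaky (a s z : ℝ) (h0 : 0 < a) (h1 : a < 1) :
    z = max s (a * s) ↔ z - s + ((1 - a) / a) * min z 0 = 0 := by
  constructor
  · intro hz
    rcases le_or_gt 0 s with hs | hs
    · have hmax : max s (a * s) = s := max_eq_left (by nlinarith)
      rw [hz, hmax]
      have : min s 0 = 0 := min_eq_right hs
      rw [this]; ring
    · have hmax : max s (a * s) = a * s := max_eq_right (by nlinarith)
      rw [hz, hmax]
      have : min (a * s) 0 = a * s := min_eq_left (by nlinarith)
      rw [this]
      field_simp
      ring
  · intro h
    rcases le_or_gt 0 z with hzp | hzn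
    · have hmin : min z 0 = 0 := min_eq_right hzp
      rw [hmin] at h
      have hsz : s = z := by linarith [h]
      subst hsz
      have : max s (a * s) = s := max_eq_left (by nlinarith)
      rw [this]
    · have hmin : min z 0 = z := min_eq_left hzn.le
      rw [hmin] at h
      have hs : s = z / a := by field_simp at h ⊢; nlinarith
      have hsn : s < 0 := by rw [hs]; exact div_neg_of_neg_of_pos hzn h0
      have : max s (a * s) = a * s := max_eq_right (by nlinarith)
      rw [this, hs]
      field_simp

/-- Equilibria of LeakyReLU recurrent networks as an operator splitting problem. -/
theorem stmt_18 {n m : ℕ} (a : ℝ) (ha : a ∈ Set.Ioo (0 : ℝ) 1)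
    (Φ : (Fin n → ℝ) → (Fin n → ℝ)) (hΦ : ∀ x i, Φ x i = max (x i) (a * x i))
    (df : (Fin n → ℝ) → (Fin n → ℝ)) (hdf : ∀ x i, df x i = ((1 - a) / a) * min (x i) 0)
    (A : Matrix (Fin n) (Fin n) ℝ) (B : Matrix (Fin n) (Fin m) ℝ)
    (u : Fin m → ℝ) (b : Fin n → ℝ) (x : Fin n → ℝ) :
    x = Φ (A.mulVec x + B.mulVec u + b) ↔
      (x - A.mulVec x) - (B.mulVec u + b) + df x = 0 := by
  obtain ⟨h0, h1⟩ := ha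
  rw [funext_iff, funext_iff]
  apply forall_congr'
  intro i
  rw [hΦ]
  simp only [Pi.add_apply, Pi.sub_apply, Pi.zero_apply, hdf]
  have := scalar_leaky a (A.mulVec x i + B.mulVec u i + b i) (x i) h0 h1
  constructor
  · intro h; have := this.mp h; linarith
  · intro h; exact this.mpr (by linarith)
end
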